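/- Let ρ be a probability measure supported on the unit ball in ℝ³, and let I₁, I₂ be its tomographic projections (pushforwards to ℝ² under the coordinate projection) at viewing orientations differing by a rotation R ∈ SO(3) with angle θ between the viewing directions u, v. Then the rotationally-invariant Wasserstein-1 distance satisfies W₁ᴿ(I₁, I₂) ≤ 2 sin(θ/2) ≤ θ. -/

import Mathlib

open MeasureTheory Real InnerProductGeometry
open scoped ENNReal

noncomputable section

abbrev R3 := EuclideanSpace ℝ (Fin 3)
abbrev R2 := EuclideanSpace ℝ (Fin 2)

/-- Coordinate projection ℝ³ → ℝ². -/
def proj : R3 → R2 := fun x => WithLp.toLp 2 (fun i => x i.castSucc : Fin 2 → ℝ)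

/-- Couplings of two measures. -/
def couplings {X : Type*} [MeasurableSpace X] (μ ν : Measure X) : Set (Measure (X × X)) :=
  {γ | γ.map Prod.fst = μ ∧ γ.map Prod.snd = ν}

/-- Wasserstein-1 distance via couplings. -/
def W1 {X : Type*} [MeasurableSpace X] [PseudoEMetricSpace X] (μ ν : Measure X) : ℝ≥0∞ :=
  ⨅ γ ∈ couplings μ ν, ∫⁻ p, edist p.1 p.2 ∂γ

def cross3 (a b : R3) : R3 :=
  (WithLp.equiv 2 (Fin 3 → ℝ)).symm
    ![a 1 * b 2 - a 2 * b 1, a 2 * b 0 - a 0 * b 2, a 0 * b 1 - a 1 * b 0]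

/-- Rodrigues rotation about unit axis `a` by angle `θ`. -/
def rodrigues (a : R3) (θ : ℝ) : R3 → R3 := fun x =>
  (Real.cos θ) • x + (Real.sin θ) • cross3 a x + ((1 - Real.cos θ) * (inner ℝ a x : ℝ)) • a

/-- `R` is a rotation by angle `θ` about some unit axis. -/
def IsAxisRotation (R : R3 → R3) (θ : ℝ) : Prop :=
  ∃ a : R3, ‖a‖ = 1 ∧ R = rodrigues a θ

/-- Planar rotation by angle α. -/
def rot2 (α : ℝ) : R2 → R2 := fun x =>
  (WithLp.equiv 2 (Fin 2 → ℝ)).symm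
    ![Real.cos α * x 0 - Real.sin α * x 1, Real.sin α * x 0 + Real.cos α * x 1]

/-- Rotationally invariant Wasserstein-1 distance on the plane. -/
def W1R (μ ν : Measure R2) : ℝ≥0∞ := ⨅ α : ℝ, W1 μ (ν.map (rot2 α))

def lift3 (w : R2) (z : ℝ) : R3 := (WithLp.equiv 2 (Fin 3 → ℝ)).symm ![w 0, w 1, z]

/-- Tomographic projection at orientation `R`. -/
def tomo (R : R3 ≃ₗᵢ[ℝ] R3) (ρ : R3 → ℝ) : R2 → ℝ := fun w => ∫ z : ℝ, ρ (R.symm (lift3 w z))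

/-- Rotationally invariant L² distance on the unit disk. -/
def L2R (I₁ I₂ : R2 → ℝ) : ℝ :=
  ⨅ α : ℝ, Real.sqrt (∫ w in Metric.closedBall (0 : R2) 1, (I₁ w - I₂ (rot2 α w)) ^ 2)

/-! Undo the in-plane part of `R` by the planar rotation `r = rot2 α`: then `r (P (R x)) = P (S x)`
for `S = rotZ α * R`, and the coupling `x ↦ (P x, P (S x))` of `I₁` and `r#I₂` has cost at most
`sup_{‖x‖ ≤ 1} ‖x - S x‖`. The angle `α` is chosen to maximise `tr S`, which makes `tr S = 1 + 2 cos θ`: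
`S` is the out-of-plane factor of `R`, a rotation by `θ`. For such `S`, Cayley–Hamilton shows that
`N = S + Sᵀ - 2 cos θ` satisfies `N² = (2 - 2 cos θ) N`, so `N ⪰ 0`, i.e. `⟪x, S x⟫ ≥ cos θ ‖x‖²`,
and hence `‖x - S x‖² ≤ (2 - 2 cos θ) ‖x‖² = (2 sin (θ / 2) ‖x‖)²`. -/

namespace Matrix

section Orthogonal

variable {n : Type*} [Fintype n] [DecidableEq n] {Q : Matrix n n ℝ}

theorem abs_le_one_of_mem_orthogonalGroup (hQ : Q ∈ orthogonalGroup n ℝ) (i j : n) :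
    |Q i j| ≤ 1 := by
  have hcol : ∑ k, Q k j ^ 2 = 1 := by
    simpa [mul_apply, sq] using congrFun₂ ((mem_orthogonalGroup_iff' _ _).mp hQ) j j
  rw [← sq_le_one_iff_abs_le_one, ← hcol]
  exact Finset.single_le_sum (f := fun k => Q k j ^ 2) (fun _ _ => sq_nonneg _)
    (Finset.mem_univ i)

theorem trace_le_card_of_mem_orthogonalGroup (hQ : Q ∈ orthogonalGroup n ℝ) :
    Q.trace ≤ Fintype.card n := by
  simpa [trace] using Finset.sum_le_sum fun i (_ : i ∈ Finset.univ) =>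
    (abs_le.mp (abs_le_one_of_mem_orthogonalGroup hQ i i)).2

theorem adjugate_eq_transpose_of_mem_specialOrthogonalGroup
    (hQ : Q ∈ specialOrthogonalGroup n ℝ) : Q.adjugate = Qᵀ := by
  obtain ⟨hQ, hdet⟩ := mem_specialOrthogonalGroup_iff.mp hQ
  calc Q.adjugate = Q.adjugate * (Q * Qᵀ) := by
        rw [(mem_orthogonalGroup_iff _ _).mp hQ, mul_one]
    _ = Qᵀ := by rw [← mul_assoc, adjugate_mul, hdet, one_smul, one_mul]

end Orthogonal

theorem adjugate_fin_three_eq (A : Matrix (Fin 3) (Fin 3) ℝ) :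
    A.adjugate = A * A - A.trace • A + ((A.trace ^ 2 - (A * A).trace) / 2) • 1 := by
  ext i j
  fin_cases i <;> fin_cases j <;>
    simp [adjugate_fin_three, mul_apply, trace_fin_three, Fin.sum_univ_three] <;> ring

section SpecialOrthogonalFinThree

variable {Q : Matrix (Fin 3) (Fin 3) ℝ}

theorem transpose_eq_of_mem_specialOrthogonalGroup_fin_three
    (hQ : Q ∈ specialOrthogonalGroup (Fin 3) ℝ) :
    Qᵀ = Q * Q - Q.trace • Q + Q.trace • 1 := by
  have hCH := (adjugate_fin_three_eq Q).symm.trans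
    (adjugate_eq_transpose_of_mem_specialOrthogonalGroup hQ)
  have htr := congrArg trace hCH
  simp only [trace_add, trace_sub, trace_smul, trace_one, trace_transpose, smul_eq_mul,
    Fintype.card_fin] at htr
  push_cast at htr
  rw [← hCH]
  congr 2
  linarith

theorem posSemidef_add_transpose_sub_of_mem_specialOrthogonalGroup
    (hQ : Q ∈ specialOrthogonalGroup (Fin 3) ℝ) :
    (Q + Qᵀ - (Q.trace - 1) • 1).PosSemidef := by
  set t := Q.trace
  set N := Q + Qᵀ - (t - 1) • (1 : Matrix (Fin 3) (Fin 3) ℝ)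
  have hQQt : Q * Qᵀ = 1 := (mem_orthogonalGroup_iff _ _).mp hQ.1
  have hQtQ : Qᵀ * Q = 1 := (mem_orthogonalGroup_iff' _ _).mp hQ.1
  have hsq : Q * Q = Qᵀ + t • Q - t • 1 := by
    rw [transpose_eq_of_mem_specialOrthogonalGroup_fin_three hQ]; abel
  have hsqt : Qᵀ * Qᵀ = Q + t • Qᵀ - t • 1 := by
    rw [← transpose_mul, hsq]; simp [transpose_sub, transpose_add]
  have hN : N * N = (3 - t) • N := by
    simp only [N, add_mul, mul_add, sub_mul, mul_sub, smul_mul, Matrix.mul_smul, one_mul, mul_one,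
      hsq, hsqt, hQQt, hQtQ, smul_smul]
    module
  have hNsymm : Nᴴ = N := by
    simp [N, conjTranspose_eq_transpose_of_trivial, transpose_sub, transpose_add, add_comm]
  have ht : t ≤ 3 := by simpa using trace_le_card_of_mem_orthogonalGroup hQ.1
  rcases ht.lt_or_eq with ht | ht
  · have hN_eq : N = (3 - t)⁻¹ • (Nᴴ * N) := by
      rw [hNsymm, hN, smul_smul, inv_mul_cancel₀ (by linarith), one_smul]
    rw [hN_eq]
    exact (posSemidef_conjTranspose_mul_self N).smul (by simp; linarith)
  · have hN_eq : N = 0 := by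
      rw [← conjTranspose_mul_self_eq_zero, hNsymm, hN, ht, sub_self, zero_smul]
    rw [hN_eq]
    exact PosSemidef.zero

theorem norm_sub_toEuclideanLin_sq_le (hQ : Q ∈ specialOrthogonalGroup (Fin 3) ℝ)
    (x : EuclideanSpace ℝ (Fin 3)) :
    ‖x - toEuclideanLin Q x‖ ^ 2 ≤ (3 - Q.trace) * ‖x‖ ^ 2 := by
  have hnorm (y : EuclideanSpace ℝ (Fin 3)) : ‖y‖ ^ 2 = y.ofLp ⬝ᵥ y.ofLp := by
    rw [← real_inner_self_eq_norm_sq, EuclideanSpace.inner_eq_star_dotProduct, star_trivial]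
  have hdisp : (1 - Q)ᵀ * (1 - Q) = (3 - Q.trace) • 1 - (Q + Qᵀ - (Q.trace - 1) • 1) := by
    rw [transpose_sub, transpose_one, sub_mul, mul_sub, mul_sub,
      (mem_orthogonalGroup_iff' _ _).mp hQ.1]
    simp only [one_mul, mul_one]
    module
  have hquad : (x.ofLp - Q *ᵥ x.ofLp) ⬝ᵥ (x.ofLp - Q *ᵥ x.ofLp)
      = x.ofLp ⬝ᵥ ((1 - Q)ᵀ * (1 - Q)) *ᵥ x.ofLp := by
    rw [← mulVec_mulVec, dotProduct_mulVec, vecMul_transpose, sub_mulVec, one_mulVec]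
  have hpsd :=
    (posSemidef_add_transpose_sub_of_mem_specialOrthogonalGroup hQ).dotProduct_mulVec_nonneg x.ofLp
  rw [star_trivial] at hpsd
  rw [hnorm, hnorm, WithLp.ofLp_sub, toLpLin_apply, WithLp.ofLp_toLp, hquad, hdisp,
    sub_mulVec, dotProduct_sub, smul_mulVec, one_mulVec, dotProduct_smul, smul_eq_mul]
  linarith

theorem sq_add_sq_eq_of_mem_specialOrthogonalGroup (hQ : Q ∈ specialOrthogonalGroup (Fin 3) ℝ) :
    (Q 0 0 + Q 1 1) ^ 2 + (Q 0 1 - Q 1 0) ^ 2 = (1 + Q 2 2) ^ 2 := by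
  have hcof : Q 0 0 * Q 1 1 - Q 0 1 * Q 1 0 = Q 2 2 := by
    have := congrFun₂ (adjugate_eq_transpose_of_mem_specialOrthogonalGroup hQ) 2 2
    simp [adjugate_fin_three] at this
    linarith
  have hrow (i : Fin 3) : Q i 0 ^ 2 + Q i 1 ^ 2 + Q i 2 ^ 2 = 1 := by
    simpa [mul_apply, Fin.sum_univ_three, sq] using
      congrFun₂ ((mem_orthogonalGroup_iff _ _).mp hQ.1) i i
  have hcol : Q 0 2 ^ 2 + Q 1 2 ^ 2 + Q 2 2 ^ 2 = 1 := by
    simpa [mul_apply, Fin.sum_univ_three, sq] using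
      congrFun₂ ((mem_orthogonalGroup_iff' _ _).mp hQ.1) 2 2
  linear_combination hrow 0 + hrow 1 - hcol + 2 * hcof

end SpecialOrthogonalFinThree

end Matrix

theorem exists_cos_mul_add_sin_mul_eq_sqrt (a b : ℝ) :
    ∃ α : ℝ, cos α * a + sin α * b = √(a ^ 2 + b ^ 2) := by
  set z : ℂ := ⟨a, b⟩
  have hz : ‖z‖ = √(a ^ 2 + b ^ 2) := by rw [Complex.norm_def, Complex.normSq_mk]; ring_nf
  have hcos : √(a ^ 2 + b ^ 2) * cos z.arg = a := hz ▸ Complex.norm_mul_cos_arg z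
  have hsin : √(a ^ 2 + b ^ 2) * sin z.arg = b := hz ▸ Complex.norm_mul_sin_arg z
  exact ⟨z.arg, by
    linear_combination -cos z.arg * hcos - sin z.arg * hsin
      + √(a ^ 2 + b ^ 2) * sin_sq_add_cos_sq z.arg⟩

def rotZ (α : ℝ) : Matrix (Fin 3) (Fin 3) ℝ :=
  !![cos α, -sin α, 0; sin α, cos α, 0; 0, 0, 1]

theorem rotZ_mem_specialOrthogonalGroup (α : ℝ) :
    rotZ α ∈ Matrix.specialOrthogonalGroup (Fin 3) ℝ := by
  refine ⟨(Matrix.mem_orthogonalGroup_iff _ _).mpr ?_, ?_⟩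
  · ext i j
    fin_cases i <;> fin_cases j <;>
      simp [rotZ, Matrix.mul_apply, Fin.sum_univ_three, ← sq, mul_comm]
  · simp [rotZ, Matrix.det_fin_three, ← sq]

theorem trace_rotZ_mul (α : ℝ) (Q : Matrix (Fin 3) (Fin 3) ℝ) :
    (rotZ α * Q).trace = cos α * (Q 0 0 + Q 1 1) + sin α * (Q 0 1 - Q 1 0) + Q 2 2 := by
  simp [rotZ, Matrix.trace_fin_three, Matrix.vecMul, dotProduct, Fin.sum_univ_three]
  ring

theorem exists_trace_rotZ_mul_eq {Q : Matrix (Fin 3) (Fin 3) ℝ}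
    (hQ : Q ∈ Matrix.specialOrthogonalGroup (Fin 3) ℝ) :
    ∃ α, (rotZ α * Q).trace = 1 + 2 * Q 2 2 := by
  obtain ⟨α, hα⟩ := exists_cos_mul_add_sin_mul_eq_sqrt (Q 0 0 + Q 1 1) (Q 0 1 - Q 1 0)
  have hQ22 : -1 ≤ Q 2 2 := (abs_le.mp (Matrix.abs_le_one_of_mem_orthogonalGroup hQ.1 2 2)).1
  refine ⟨α, ?_⟩
  rw [trace_rotZ_mul, hα, Matrix.sq_add_sq_eq_of_mem_specialOrthogonalGroup hQ,
    Real.sqrt_sq (by linarith)]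
  ring

theorem proj_sub (x y : R3) : proj (x - y) = proj x - proj y := rfl

theorem norm_proj_le (x : R3) : ‖proj x‖ ≤ ‖x‖ := by
  rw [EuclideanSpace.norm_eq, EuclideanSpace.norm_eq, Fin.sum_univ_castSucc (n := 2)]
  exact Real.sqrt_le_sqrt (le_add_of_nonneg_right (by positivity))

theorem continuous_proj : Continuous proj := by
  unfold proj; fun_prop

theorem continuous_rot2 (α : ℝ) : Continuous (rot2 α) := by
  refine (PiLp.continuous_toLp 2 _).comp (continuous_pi fun i => ?_)
  fin_cases i <;> simp <;> fun_prop

theorem proj_toEuclideanLin_rotZ (α : ℝ) (y : R3) :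
    proj (Matrix.toEuclideanLin (rotZ α) y) = rot2 α (proj y) := by
  ext i
  fin_cases i <;> simp [proj, rot2, rotZ, Matrix.toLpLin_apply, dotProduct, Fin.sum_univ_three]
  ring

theorem exists_norm_proj_sub_rot2_sq_le {Q : Matrix (Fin 3) (Fin 3) ℝ}
    (hQ : Q ∈ Matrix.specialOrthogonalGroup (Fin 3) ℝ) :
    ∃ α, ∀ x : R3,
      ‖proj x - rot2 α (proj (Matrix.toEuclideanLin Q x))‖ ^ 2 ≤ 2 * (1 - Q 2 2) * ‖x‖ ^ 2 := by
  obtain ⟨α, hα⟩ := exists_trace_rotZ_mul_eq hQ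
  have hS := mul_mem (rotZ_mem_specialOrthogonalGroup α) hQ
  refine ⟨α, fun x => ?_⟩
  have hcomp : rot2 α (proj (Matrix.toEuclideanLin Q x))
      = proj (Matrix.toEuclideanLin (rotZ α * Q) x) := by
    rw [← proj_toEuclideanLin_rotZ]
    simp [Matrix.toLpLin_apply, Matrix.mulVec_mulVec]
  calc ‖proj x - rot2 α (proj (Matrix.toEuclideanLin Q x))‖ ^ 2
      ≤ ‖x - Matrix.toEuclideanLin (rotZ α * Q) x‖ ^ 2 := by
        rw [hcomp, ← proj_sub]
        exact pow_le_pow_left₀ (norm_nonneg _) (norm_proj_le _) 2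
    _ ≤ (3 - (rotZ α * Q).trace) * ‖x‖ ^ 2 := Matrix.norm_sub_toEuclideanLin_sq_le hS x
    _ = 2 * (1 - Q 2 2) * ‖x‖ ^ 2 := by rw [hα]; ring

theorem exists_dist_proj_rot2_le (R : R3 ≃ₗᵢ[ℝ] R3)
    (hdet : LinearMap.det (R.toLinearEquiv : R3 →ₗ[ℝ] R3) = 1) :
    ∃ α, ∀ x : R3, dist (proj x) (rot2 α (proj (R x))) ≤
      dist (EuclideanSpace.single 2 1) (R (EuclideanSpace.single 2 1)) * ‖x‖ := by
  set b := (EuclideanSpace.basisFun (Fin 3) ℝ).toBasis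
  set e : R3 := EuclideanSpace.single 2 1
  set Q := LinearMap.toMatrix b b (R.toLinearEquiv : R3 →ₗ[ℝ] R3)
  have hQ : Q ∈ Matrix.specialOrthogonalGroup (Fin 3) ℝ :=
    Matrix.mem_specialOrthogonalGroup_iff.mpr
      ⟨R.toMatrix_mem_unitaryGroup _ _, by rw [LinearMap.det_toMatrix]; exact hdet⟩
  have hRQ (x : R3) : Matrix.toEuclideanLin Q x = R x := by
    rw [Matrix.toEuclideanLin_eq_toLin_orthonormal, Matrix.toLin_toMatrix]; rfl
  have hQ22 : Q 2 2 = inner ℝ e (R e) := by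
    rw [← hRQ]; simp [e, Matrix.toLpLin_apply, EuclideanSpace.inner_single_left]
  have hde : dist e (R e) ^ 2 = 2 * (1 - Q 2 2) := by
    rw [dist_eq_norm, norm_sub_sq_real, R.norm_map, hQ22]
    simp [e]; ring
  obtain ⟨α, hα⟩ := exists_norm_proj_sub_rot2_sq_le hQ
  refine ⟨α, fun x => ?_⟩
  rw [dist_eq_norm, ← hRQ]
  refine (pow_le_pow_iff_left₀ (norm_nonneg _) (by positivity) two_ne_zero).mp ?_
  rw [mul_pow, hde]
  exact hα x

theorem W1_map_le_lintegral_edist {X Y : Type*} [MeasurableSpace X] [MeasurableSpace Y]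
    [PseudoEMetricSpace Y] {μ : Measure X} {f g : X → Y} (hf : Measurable f) (hg : Measurable g) :
    W1 (μ.map f) (μ.map g) ≤ ∫⁻ x, edist (f x) (g x) ∂μ := by
  have hcoupling : μ.map (fun x => (f x, g x)) ∈ couplings (μ.map f) (μ.map g) :=
    ⟨Measure.map_map measurable_fst (hf.prodMk hg), Measure.map_map measurable_snd (hf.prodMk hg)⟩
  exact (iInf₂_le _ hcoupling).trans (lintegral_map_le _ _)

theorem InnerProductGeometry.dist_eq_two_mul_sin_angle_div_two {V : Type*}
    [NormedAddCommGroup V] [InnerProductSpace ℝ V] {u v : V} (hu : ‖u‖ = 1) (hv : ‖v‖ = 1) :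
    dist u v = 2 * sin (angle u v / 2) := by
  have hsin : 0 ≤ sin (angle u v / 2) :=
    sin_nonneg_of_nonneg_of_le_pi (by linarith [angle_nonneg u v])
      (by linarith [angle_le_pi u v, pi_pos])
  have hcos := norm_sub_sq_eq_norm_sq_add_norm_sq_sub_two_mul_norm_mul_norm_mul_cos_angle u v
  have hhalf := sin_sq_eq_half_sub (angle u v / 2)
  rw [hu, hv] at hcos
  rw [mul_div_cancel₀ _ two_ne_zero] at hhalf
  rw [dist_eq_norm, ← sq_eq_sq₀ (norm_nonneg _) (by positivity)]
  linear_combination hcos - 4 * hhalf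

theorem stmt3 (ρ : Measure R3) [IsProbabilityMeasure ρ] (hρ : ρ (Metric.closedBall 0 1)ᶜ = 0)
    (R : R3 ≃ₗᵢ[ℝ] R3) (hdet : LinearMap.det (R.toLinearEquiv : R3 →ₗ[ℝ] R3) = 1)
    (u v : R3) (hu : u = -(EuclideanSpace.single 2 (1:ℝ))) (hv : v = R u)
    (θ : ℝ) (hθ : θ = angle u v) :
    W1R (ρ.map proj) ((ρ.map R).map proj) ≤ ENNReal.ofReal (2 * Real.sin (θ / 2)) ∧
      2 * Real.sin (θ / 2) ≤ θ := by
  have hθ0 : 0 ≤ θ := hθ ▸ angle_nonneg u v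
  refine ⟨?_, by linarith [sin_le (by linarith : 0 ≤ θ / 2)]⟩
  obtain ⟨α, hα⟩ := exists_dist_proj_rot2_le R hdet
  have hu1 : ‖u‖ = 1 := by simp [hu]
  have hchord : dist (EuclideanSpace.single 2 1) (R (EuclideanSpace.single 2 1))
      = 2 * sin (θ / 2) := by
    rw [← dist_neg_neg, ← map_neg, ← hu, ← hv, hθ,
      dist_eq_two_mul_sin_angle_div_two hu1 (by rw [hv, R.norm_map, hu1])]
  have hball : ∀ᵐ x ∂ρ, edist (proj x) (rot2 α (proj (R x))) ≤ ENNReal.ofReal (2 * sin (θ / 2)) := by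
    refine (measure_eq_zero_iff_ae_notMem.mp hρ).mono fun x hx => ?_
    rw [edist_dist, ← hchord]
    refine ENNReal.ofReal_le_ofReal ((hα x).trans (mul_le_of_le_one_right dist_nonneg ?_))
    simpa using hx
  have hproj := continuous_proj.measurable
  have hR := R.continuous.measurable
  calc W1R (ρ.map proj) ((ρ.map R).map proj)
      ≤ W1 (ρ.map proj) (((ρ.map R).map proj).map (rot2 α)) := iInf_le _ α
    _ = W1 (ρ.map proj) (ρ.map (rot2 α ∘ proj ∘ R)) := by
      rw [Measure.map_map hproj hR, Measure.map_map (continuous_rot2 α).measurable (hproj.comp hR)]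
    _ ≤ ∫⁻ x, edist (proj x) (rot2 α (proj (R x))) ∂ρ :=
      W1_map_le_lintegral_edist hproj ((continuous_rot2 α).measurable.comp (hproj.comp hR))
    _ ≤ ∫⁻ _, ENNReal.ofReal (2 * sin (θ / 2)) ∂ρ := lintegral_mono_ae hball
    _ = ENNReal.ofReal (2 * sin (θ / 2)) := by simp
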